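/- Let I be a monomial ideal in R = k[x_1,...,x_r], y a new variable, and S = R[y]. Then for every n ≥ 1, \overline{(I,y)^n} = ∑_{i=0}^{n} y^i · \overline{I^{n−i}} S, where \overline{J} denotes integral closure and \overline{I^0} = R. -/

import Mathlib

open MvPolynomial Pointwise

/-- `J` is the integral closure of the ideal `I`: the set of elements `x` satisfying an
integral relation `x^n + a_1 x^{n-1} + ... + a_n = 0` with `a_i ∈ I^i`. -/
def IsIntClosure {R : Type*} [CommRing R] (I J : Ideal R) : Prop :=
  ∀ x : R, x ∈ J ↔ ∃ n : ℕ, 0 < n ∧ ∃ a : ℕ → R, (∀ i, a i ∈ I ^ i) ∧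
    x ^ n + ∑ i ∈ Finset.Icc 1 n, a i * x ^ (n - i) = 0

/-- A monomial ideal in a polynomial ring: an ideal generated by monomials. -/
def IsMonomialIdeal {k : Type*} [Field k] {σ : Type*} (I : Ideal (MvPolynomial σ k)) : Prop :=
  ∃ S : Set (σ →₀ ℕ), I = Ideal.span ((fun a => (monomial a (1 : k))) '' S)

/-- depth of `R/J` with respect to the ideal `m`: the supremum of lengths of regular
sequences on `R/J` consisting of elements of `m`. -/
noncomputable def quotDepth {R : Type*} [CommRing R] (m J : Ideal R) : ℕ :=
  sSup {n : ℕ | ∃ rs : List R, rs.length = n ∧ (∀ x ∈ rs, x ∈ m) ∧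
    RingTheory.Sequence.IsRegular (R ⧸ J) rs}

/-- `R/J` is Cohen-Macaulay: depth equals Krull dimension. -/
def QuotIsCM {R : Type*} [CommRing R] (m J : Ideal R) : Prop :=
  (quotDepth m J : WithBot ℕ∞) = ringKrullDim (R ⧸ J)

/-- Krull dimension of a ring, as a natural number. -/
noncomputable def dimNat (R : Type*) [CommRing R] : ℕ :=
  ENat.toNat (WithBot.unbotD 0 (ringKrullDim R))

/-- analytic spread of `I`: the Krull dimension of the fiber cone, i.e. of the
Rees algebra of `I` modulo the extension of the maximal ideal `m`. -/
noncomputable def analyticSpread {R : Type*} [CommRing R] (m I : Ideal R) : ℕ :=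
  dimNat ((reesAlgebra I) ⧸ (Ideal.map (algebraMap R (reesAlgebra I)) m))

/-- height of an ideal: infimum of heights of primes containing it. -/
noncomputable def idealHeight {R : Type*} [CommRing R] (I : Ideal R) : ℕ∞ :=
  ⨅ p ∈ {p : PrimeSpectrum R | I ≤ p.asIdeal}, Order.height p

/-- the maximal homogeneous ideal `(x_1,...,x_r)` of a polynomial ring. -/
noncomputable def maxIdeal (k : Type*) [Field k] (σ : Type*) : Ideal (MvPolynomial σ k) :=
  Ideal.span (Set.range X)

/-- exponent set of a monomial ideal, viewed in `ℝ^r`. -/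
def expSet {k : Type*} [Field k] {r : ℕ} (I : Ideal (MvPolynomial (Fin r) k)) :
    Set (Fin r → ℝ) :=
  {x | ∃ a : Fin r →₀ ℕ, monomial a (1 : k) ∈ I ∧ x = fun i => (a i : ℝ)}

/-- Newton polyhedron of a monomial ideal: convex hull of the exponent set. -/
noncomputable def newtonPolyhedron {k : Type*} [Field k] {r : ℕ}
    (I : Ideal (MvPolynomial (Fin r) k)) : Set (Fin r → ℝ) :=
  convexHull ℝ (expSet I)

/-- a simplicial complex on the vertex set `σ`: a downward closed family of finite sets. -/
def IsSimplicialComplex {σ : Type*} (Δ : Set (Finset σ)) : Prop :=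
  ∅ ∈ Δ ∧ ∀ F ∈ Δ, ∀ G ⊆ F, G ∈ Δ

/-- Stanley-Reisner ideal of a simplicial complex: generated by the squarefree
monomials corresponding to non-faces. -/
noncomputable def srIdeal {k : Type*} [Field k] {σ : Type*} (Δ : Set (Finset σ)) :
    Ideal (MvPolynomial σ k) :=
  Ideal.span {f | ∃ F : Finset σ, F ∉ Δ ∧ f = ∏ i ∈ F, X i}

/-- the degree complex `Δ_α(J)` of a monomial ideal `J`:
`F ∈ Δ_α(J)` iff `x^α ∉ J R_F`, i.e. no multiple of `x^α` by a monomial in the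
variables of `F` lies in `J`. -/
def degComplex {k : Type*} [Field k] {r : ℕ} (J : Ideal (MvPolynomial (Fin r) k))
    (α : Fin r →₀ ℕ) : Set (Finset (Fin r)) :=
  {F | ∀ γ : Fin r →₀ ℕ, (∀ i, γ i ≠ 0 → i ∈ F) → monomial (α + γ) (1 : k) ∉ J}

/-- an ideal is unmixed if all associated primes of `R/J` have the same height. -/
def IsUnmixed {R : Type*} [CommRing R] (J : Ideal R) : Prop :=
  ∀ p ∈ associatedPrimes R (R ⧸ J), ∀ q ∈ associatedPrimes R (R ⧸ J),
    idealHeight p = idealHeight q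

/-! Write `M = (I, X)` in `A[X]`. The right-hand side lies in `\overline{M^n}`, so by induction on
the degree it suffices that the leading term `c X^D` of every `f ∈ \overline{M^n}` lies in the
right-hand side. For `D ≥ n` it is a multiple of `X^n`. For `D < n`, an integral equation of `f`
puts `f^(m+N)` in `M^(n(N+1))`, and the coefficient of `X^j` of an element of `M^p` lies in
`I^(p-j)`; reading off the top coefficient gives `c^(m+N) ∈ I^((n-D)N - mD)` for all `N`, and a
determinant trick in the Noetherian Rees algebra of `I^(n-D)` turns this into integrality of `c`
over `I^(n-D)`. -/

theorem Ideal.span_singleton_mul_map_le {A B : Type*} [CommRing A] [CommRing B] {f : A →+* B}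
    {x : B} {J : Ideal A} {K : Ideal B} (h : ∀ b ∈ J, x * f b ∈ K) :
    Ideal.span {x} * J.map f ≤ K := by
  have hcolon : J.map f ≤ K.colon {x} := Ideal.map_le_iff_le_comap.2 fun b hb =>
    Submodule.mem_colon_singleton.2 (by rw [smul_eq_mul, mul_comm]; exact h b hb)
  refine Ideal.span_singleton_mul_le_iff.2 fun z hz => ?_
  rw [mul_comm]
  exact Submodule.mem_colon_singleton.1 (hcolon hz)

section IntegralOverIdeal

variable {A : Type*} [CommRing A]

/-- `IsIntClosure I J` unfolds to `∀ x, x ∈ J ↔ IsIntegralOverIdeal I x`. -/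
def IsIntegralOverIdeal (J : Ideal A) (x : A) : Prop :=
  ∃ n : ℕ, 0 < n ∧ ∃ a : ℕ → A, (∀ i, a i ∈ J ^ i) ∧
    x ^ n + ∑ i ∈ Finset.Icc 1 n, a i * x ^ (n - i) = 0

theorem isIntegralOverIdeal_of_mem {J : Ideal A} {x : A} (hx : x ∈ J) :
    IsIntegralOverIdeal J x := by
  refine ⟨1, one_pos, fun i => if i = 1 then -x else 0, fun i => ?_, by simp⟩
  dsimp only
  split_ifs with hi
  · subst hi
    simpa using hx
  · exact zero_mem _

theorem IsIntegralOverIdeal.mono {J J' : Ideal A} {x : A} (hJ : J ≤ J')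
    (hx : IsIntegralOverIdeal J x) : IsIntegralOverIdeal J' x := by
  obtain ⟨n, hn, a, ha, h⟩ := hx
  exact ⟨n, hn, a, fun i => Ideal.pow_right_mono hJ i (ha i), h⟩

theorem IsIntegralOverIdeal.map {B : Type*} [CommRing B] (φ : A →+* B) {J : Ideal A} {x : A}
    (hx : IsIntegralOverIdeal J x) : IsIntegralOverIdeal (J.map φ) (φ x) := by
  obtain ⟨n, hn, a, ha, h⟩ := hx
  refine ⟨n, hn, φ ∘ a, fun i => ?_, ?_⟩
  · rw [Function.comp_apply, ← Ideal.map_pow]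
    exact Ideal.mem_map_of_mem φ (ha i)
  · simpa using congrArg φ h

theorem IsIntegralOverIdeal.mul_mem {J L : Ideal A} {x y : A} (hx : IsIntegralOverIdeal J x)
    (hy : y ∈ L) : IsIntegralOverIdeal (J * L) (x * y) := by
  obtain ⟨n, hn, a, ha, h⟩ := hx
  refine ⟨n, hn, fun i => a i * y ^ i, fun i => ?_, ?_⟩
  · rw [mul_pow]
    exact Ideal.mul_mem_mul (ha i) (Ideal.pow_mem_pow hy i)
  · have hterm : ∀ i ∈ Finset.Icc 1 n, a i * y ^ i * (x * y) ^ (n - i) =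
        a i * x ^ (n - i) * y ^ n := by
      intro i hi
      rw [Finset.mem_Icc] at hi
      rw [← Nat.add_sub_of_le hi.2, pow_add y, Nat.add_sub_cancel_left]
      ring
    rw [Finset.sum_congr rfl hterm, ← Finset.sum_mul, mul_pow, ← add_mul, h, zero_mul]

theorem IsIntegralOverIdeal.exists_pow_add_mem {J : Ideal A} {x : A}
    (hx : IsIntegralOverIdeal J x) : ∃ m, ∀ N, x ^ (m + N) ∈ J ^ (N + 1) := by
  obtain ⟨m, -, a, ha, h⟩ := hx
  refine ⟨m, fun N => ?_⟩
  induction N using Nat.strong_induction_on with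
  | _ N ih =>
    have hxm : x ^ (m + N) = -∑ i ∈ Finset.Icc 1 m, a i * x ^ (m - i) * x ^ N := by
      rw [pow_add, eq_neg_of_add_eq_zero_left h, neg_mul, Finset.sum_mul]
    rw [hxm]
    refine neg_mem (Submodule.sum_mem _ fun i hi => ?_)
    rw [Finset.mem_Icc] at hi
    by_cases hiN : i ≤ N
    · rw [mul_assoc, ← pow_add, show m - i + N = m + (N - i) by omega]
      have hle : J ^ i * J ^ (N - i + 1) ≤ J ^ (N + 1) := by
        rw [← pow_add]
        exact Ideal.pow_le_pow_right (by omega)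
      exact hle (Ideal.mul_mem_mul (ha i) (ih (N - i) (by omega)))
    · exact Ideal.mul_mem_right _ _
        (Ideal.mul_mem_right _ _ (Ideal.pow_le_pow_right (by omega) (ha i)))

theorem isIntegralOverIdeal_of_pow_eq_sum {J : Ideal A} {x : A} {m : ℕ} (hm : 0 < m)
    (b : ℕ → A) (hb : ∀ t < m, b t ∈ J ^ (m - t))
    (h : x ^ m = ∑ t ∈ Finset.range m, b t * x ^ t) : IsIntegralOverIdeal J x := by
  refine ⟨m, hm, fun i => if 1 ≤ i ∧ i ≤ m then -b (m - i) else 0, fun i => ?_, ?_⟩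
  · dsimp only
    split_ifs with hi
    · simpa [Nat.sub_sub_self hi.2] using hb (m - i) (by omega)
    · exact zero_mem _
  · have hreflect : ∑ i ∈ Finset.Icc 1 m, b (m - i) * x ^ (m - i) =
        ∑ t ∈ Finset.range m, b t * x ^ t :=
      Finset.sum_nbij' (fun i => m - i) (fun t => m - t) (by simp; omega) (by simp; omega)
        (by simp; omega) (by simp; omega) (fun _ _ => rfl)
    dsimp only
    rw [Finset.sum_congr rfl fun i hi => by rw [if_pos (Finset.mem_Icc.mp hi), neg_mul],
      Finset.sum_neg_distrib, hreflect, ← h, add_neg_cancel]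

end IntegralOverIdeal

section Rees

variable {A : Type*} [CommRing A] [IsDomain A] [IsNoetherianRing A]

/-- The ideals of the Rees algebra generated by `v c^t X^t`, `t < N`, stabilise; comparing
coefficients of `X^m` in `v c^m X^m = ∑_{t<m} g_t v c^t X^t` and cancelling `v` gives the
integral equation. -/
theorem isIntegralOverIdeal_of_mul_pow_mem {J : Ideal A} {c v : A} (hv : v ≠ 0)
    (h : ∀ N, v * c ^ N ∈ J ^ N) : IsIntegralOverIdeal J c := by
  let E : ℕ → reesAlgebra J := fun t =>
    ⟨Polynomial.C (v * c ^ t) * Polynomial.X ^ t, (mem_reesAlgebra_iff J _).2 fun i => by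
      rw [Polynomial.coeff_C_mul_X_pow]
      split_ifs with hi
      · exact hi ▸ h i
      · exact zero_mem _⟩
  let F : ℕ →o Ideal (reesAlgebra J) :=
    ⟨fun N => Ideal.span (Set.range fun t : Fin N => E t), fun N N' hN =>
      Ideal.span_mono (Set.range_subset_iff.2 fun t => ⟨Fin.castLE hN t, rfl⟩)⟩
  obtain ⟨M, hM⟩ := monotone_stabilizes_iff_noetherian.mpr inferInstance F
  set m := M + 1
  have hEm : E m ∈ F m := by
    rw [← hM m (by omega), hM (m + 1) (by omega)]
    exact Ideal.subset_span ⟨Fin.last m, rfl⟩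
  obtain ⟨g, hg⟩ := Ideal.mem_span_range_iff_exists_fun.1 hEm
  have hcoeff := congrArg (fun p : reesAlgebra J => (p : Polynomial A).coeff m) hg
  simp only [E, AddSubmonoidClass.coe_finsetSum, MulMemClass.coe_mul, Polynomial.finsetSum_coeff,
    ← mul_assoc, Polynomial.coeff_mul_X_pow', Polynomial.coeff_mul_C, le_refl, if_true,
    Nat.sub_self, Polynomial.coeff_C_zero] at hcoeff
  let b : ℕ → A := fun t =>
    if ht : t < m then (g ⟨t, ht⟩ : Polynomial A).coeff (m - t) else 0
  refine isIntegralOverIdeal_of_pow_eq_sum (m := m) M.succ_pos b (fun t ht => ?_)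
    (mul_left_cancel₀ hv ?_)
  · simp only [b, dif_pos ht]
    exact (mem_reesAlgebra_iff J _).1 (g ⟨t, ht⟩).2 (m - t)
  · rw [← hcoeff, Finset.mul_sum, ← Fin.sum_univ_eq_sum_range]
    refine Finset.sum_congr rfl fun t _ => ?_
    simp only [b, if_pos t.2.le, dif_pos t.2]
    ring

theorem isIntegralOverIdeal_pow_of_pow_add_mem {I : Ideal A} {c : A} (hc : c ≠ 0) {e m d : ℕ}
    (he : 0 < e) (h : ∀ N, c ^ (m + N) ∈ I ^ (e * N - d)) : IsIntegralOverIdeal (I ^ e) c := by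
  have hu : c ^ (m + (d + 1)) ∈ I := by
    have : d + 1 ≤ e * (d + 1) := Nat.le_mul_of_pos_left _ he
    exact Ideal.pow_le_self (by omega) (h (d + 1))
  refine isIntegralOverIdeal_of_mul_pow_mem (v := (c ^ (m + (d + 1))) ^ d * c ^ m)
    (by simp [hc]) fun N => ?_
  have hle : I ^ d * I ^ (e * N - d) ≤ (I ^ e) ^ N := by
    rw [← pow_add, ← pow_mul]
    exact Ideal.pow_le_pow_right (by omega)
  rw [mul_assoc, ← pow_add]
  exact hle (Ideal.mul_mem_mul (Ideal.pow_mem_pow hu d) (h N))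

end Rees

namespace Polynomial

variable {A : Type*} [CommRing A]

theorem ideal_le_of_leadingMonomial_mem {K L : Ideal A[X]} (hLK : L ≤ K)
    (h : ∀ f ∈ K, f ≠ 0 → C f.leadingCoeff * X ^ f.natDegree ∈ L) : K ≤ L := by
  intro f hf
  induction hd : f.natDegree using Nat.strong_induction_on generalizing f with
  | _ d ih =>
    by_cases hf0 : f = 0
    · exact hf0 ▸ zero_mem L
    have hlead := h f hf hf0
    have hrest : f.eraseLead ∈ K := self_sub_C_mul_X_pow f ▸ sub_mem hf (hLK hlead)
    rw [← eraseLead_add_C_mul_X_pow f]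
    refine add_mem ?_ hlead
    rcases eraseLead_natDegree_lt_or_eraseLead_eq_zero f with hlt | hzero
    · exact ih _ (hd ▸ hlt) hrest rfl
    · exact hzero ▸ zero_mem L

def coeffPowIdeal (I : Ideal A) (p : ℕ) : Ideal A[X] where
  carrier := {g | ∀ j, g.coeff j ∈ I ^ (p - j)}
  add_mem' hg hh j := by
    simpa only [coeff_add] using add_mem (hg j) (hh j)
  zero_mem' j := by simp
  smul_mem' s g hg j := by
    rw [smul_eq_mul, coeff_mul]
    refine sum_mem fun x hx => ?_
    rw [Finset.HasAntidiagonal.mem_antidiagonal] at hx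
    exact Ideal.mul_mem_left _ _ (Ideal.pow_le_pow_right (by omega) (hg x.2))

theorem coeffPowIdeal_mul_le (I : Ideal A) (p q : ℕ) :
    coeffPowIdeal I p * coeffPowIdeal I q ≤ coeffPowIdeal I (p + q) := by
  refine Ideal.mul_le.2 fun g hg h hh j => ?_
  rw [coeff_mul]
  refine sum_mem fun x hx => ?_
  rw [Finset.HasAntidiagonal.mem_antidiagonal] at hx
  have hle : I ^ (p - x.1) * I ^ (q - x.2) ≤ I ^ (p + q - j) := by
    rw [← pow_add]
    exact Ideal.pow_le_pow_right (by omega)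
  exact hle (Ideal.mul_mem_mul (hg x.1) (hh x.2))

theorem map_C_sup_span_X_pow_le_coeffPowIdeal (I : Ideal A) (p : ℕ) :
    (I.map C ⊔ Ideal.span {X}) ^ p ≤ coeffPowIdeal I p := by
  induction p with
  | zero => exact fun g _ j => by simp
  | succ p ih =>
    have hbase : I.map C ⊔ Ideal.span {X} ≤ coeffPowIdeal I 1 := by
      refine sup_le (Ideal.map_le_iff_le_comap.2 fun b hb j => ?_)
        ((Ideal.span_singleton_le_iff_mem _).2 fun j => ?_)
      · rw [coeff_C]
        split_ifs with hj
        · simpa [hj] using hb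
        · exact zero_mem _
      · rw [coeff_X]
        split_ifs with hj
        · simp [← hj]
        · exact zero_mem _
    rw [pow_succ]
    exact (Ideal.mul_mono ih hbase).trans (coeffPowIdeal_mul_le I p 1)

theorem isIntegralOverIdeal_C_mul_X_pow {I : Ideal A} {n i : ℕ} (hi : i ≤ n) {b : A}
    (hb : IsIntegralOverIdeal (I ^ (n - i)) b) :
    IsIntegralOverIdeal ((I.map C ⊔ Ideal.span {X}) ^ n) (C b * X ^ i) := by
  refine ((hb.map C).mul_mem (Ideal.pow_mem_pow (Ideal.mem_span_singleton_self X) i)).mono ?_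
  calc (I ^ (n - i)).map C * Ideal.span {X} ^ i
      ≤ (I.map C ⊔ Ideal.span {X}) ^ (n - i) * (I.map C ⊔ Ideal.span {X}) ^ i := by
        rw [Ideal.map_pow]
        exact Ideal.mul_mono (Ideal.pow_right_mono le_sup_left _)
          (Ideal.pow_right_mono le_sup_right _)
    _ = (I.map C ⊔ Ideal.span {X}) ^ n := by rw [← pow_add, Nat.sub_add_cancel hi]

theorem isIntegralOverIdeal_leadingCoeff [IsDomain A] [IsNoetherianRing A] {I : Ideal A} {n : ℕ}
    {f : A[X]} (hf : IsIntegralOverIdeal ((I.map C ⊔ Ideal.span {X}) ^ n) f) (hf0 : f ≠ 0)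
    (hlt : f.natDegree < n) : IsIntegralOverIdeal (I ^ (n - f.natDegree)) f.leadingCoeff := by
  obtain ⟨m, hm⟩ := hf.exists_pow_add_mem
  set D := f.natDegree
  refine isIntegralOverIdeal_pow_of_pow_add_mem (leadingCoeff_ne_zero.2 hf0) (by omega)
    (m := m) (d := m * D) fun N => ?_
  have hcoeff : (f ^ (m + N)).coeff ((m + N) * D) ∈ I ^ (n * (N + 1) - (m + N) * D) := by
    refine map_C_sup_span_X_pow_le_coeffPowIdeal I _ ?_ _
    rw [pow_mul]
    exact hm N
  have hlc : (f ^ (m + N)).coeff ((m + N) * D) = f.leadingCoeff ^ (m + N) := by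
    rw [← natDegree_pow, coeff_natDegree, leadingCoeff_pow]
  rw [hlc] at hcoeff
  refine Ideal.pow_le_pow_right ?_ hcoeff
  have hsplit : (n - D) * N + D * N = n * N := by rw [← add_mul, Nat.sub_add_cancel hlt.le]
  have hexp : n * (N + 1) - (m + N) * D = (n * N + n) - (m * D + D * N) := by ring_nf
  omega

theorem intClosure_pow_map_C_sup_span_X [IsDomain A] [IsNoetherianRing A] (I : Ideal A) (n : ℕ)
    (Jb : ℕ → Ideal A) (hJb : ∀ i ≤ n, IsIntClosure (I ^ i) (Jb i)) (K : Ideal A[X])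
    (hK : IsIntClosure ((I.map C ⊔ Ideal.span {X}) ^ n) K) :
    K = ⨆ i ∈ Finset.range (n + 1), Ideal.span {X ^ i} * (Jb (n - i)).map C := by
  set L := ⨆ i ∈ Finset.range (n + 1), Ideal.span {X ^ i} * (Jb (n - i)).map C
  have hJb0 : Jb 0 = ⊤ :=
    eq_top_iff.2 fun b _ => (hJb 0 n.zero_le b).2 (isIntegralOverIdeal_of_mem (by simp))
  have hmemL : ∀ i ≤ n, ∀ b ∈ Jb (n - i), C b * X ^ i ∈ L := by
    intro i hi b hb
    refine Submodule.mem_iSup_of_mem i (Submodule.mem_iSup_of_mem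
      (Finset.mem_range.2 (Nat.lt_succ_of_le hi)) ?_)
    rw [mul_comm (C b)]
    exact Ideal.mul_mem_mul (Ideal.mem_span_singleton_self _) (Ideal.mem_map_of_mem C hb)
  have hLK : L ≤ K := iSup₂_le fun i hi => Ideal.span_singleton_mul_map_le fun b hb => by
    rw [mul_comm]
    exact (hK _).2 (isIntegralOverIdeal_C_mul_X_pow
      (Nat.le_of_lt_succ (Finset.mem_range.1 hi)) ((hJb _ (Nat.sub_le n i) b).1 hb))
  refine le_antisymm (ideal_le_of_leadingMonomial_mem hLK fun f hf hf0 => ?_) hLK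
  rcases lt_or_ge f.natDegree n with hlt | hge
  · exact hmemL _ hlt.le _ ((hJb _ (Nat.sub_le _ _) _).2
      (isIntegralOverIdeal_leadingCoeff ((hK f).1 hf) hf0 hlt))
  · rw [← Nat.sub_add_cancel hge, pow_add, mul_left_comm]
    exact L.mul_mem_left _ (hmemL n le_rfl _ (by simp [hJb0]))

end Polynomial

theorem intClosure_pow_sup_var_general {k : Type*} [Field k] {r : ℕ}
    (I : Ideal (MvPolynomial (Fin r) k)) (n : ℕ)
    (Jb : ℕ → Ideal (MvPolynomial (Fin r) k))
    (hJb : ∀ i, i ≤ n → IsIntClosure (I ^ i) (Jb i))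
    (K : Ideal (Polynomial (MvPolynomial (Fin r) k)))
    (hK : IsIntClosure
      ((Ideal.map Polynomial.C I ⊔ Ideal.span {(Polynomial.X : Polynomial (MvPolynomial (Fin r) k))}) ^ n) K) :
    K = ⨆ i ∈ Finset.range (n + 1),
      Ideal.span {(Polynomial.X : Polynomial (MvPolynomial (Fin r) k)) ^ i} *
        Ideal.map Polynomial.C (Jb (n - i)) :=
  Polynomial.intClosure_pow_map_C_sup_span_X I n Jb hJb K hK

/-- `\overline{(I,y)^n} = ∑_{i=0}^n y^i \overline{I^{n-i}} S` in `S = R[y]`. -/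
theorem intClosure_pow_sup_var {k : Type*} [Field k] {r : ℕ}
    (I : Ideal (MvPolynomial (Fin r) k)) (hI : IsMonomialIdeal I) (n : ℕ) (hn : 1 ≤ n)
    (Jb : ℕ → Ideal (MvPolynomial (Fin r) k))
    (hJb : ∀ i, i ≤ n → IsIntClosure (I ^ i) (Jb i))
    (K : Ideal (Polynomial (MvPolynomial (Fin r) k)))
    (hK : IsIntClosure
      ((Ideal.map Polynomial.C I ⊔ Ideal.span {(Polynomial.X : Polynomial (MvPolynomial (Fin r) k))}) ^ n) K) :
    K = ⨆ i ∈ Finset.range (n + 1),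
      Ideal.span {(Polynomial.X : Polynomial (MvPolynomial (Fin r) k)) ^ i} *
        Ideal.map Polynomial.C (Jb (n - i)) :=
  intClosure_pow_sup_var_general I n Jb hJb K hK
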